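/- Let Z_i, i=1,…,m₁, be independent N(θ√(log m),1) random variables with 0 < θ and let t_m = G⁻¹(C·m^{β−1}) with G(t)=2(1−Φ(t)), β ∈ (0,1), C>0. If θ < √(2(1−β)), then (1/m₁)·Σ_i 1{|Z_i| ≥ t_m} → 0 in probability as m → ∞. -/

import Mathlib

open MeasureTheory ProbabilityTheory Filter

/-- The standard normal CDF. -/
noncomputable def stdNormalCDF (t : ℝ) : ℝ :=
  (gaussianReal 0 1 (Set.Iic t)).toReal

/-- `G(t) = 2(1 - Φ(t))`. -/
noncomputable def Gtail (t : ℝ) : ℝ := 2 * (1 - stdNormalCDF t)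

/-!
Write `u = √(log m)`, so that `G(t_m) = C·m^(β-1) = C·exp(-(1-β)u²)`. For `s = θu + K` the density
bound `G(s) ≥ 2φ(s + 1) ∝ exp(-(θu + K + 1)²/2)` eventually beats `G(t_m)` because
`θ²/2 < 1 - β`, so `t_m > θu + K` by monotonicity of `G`: the gap `t_m - θu` tends to infinity.
Each indicator then has probability at most `P(|N(0,1)| ≥ t_m - θu) → 0`, and Markov's inequality
for the average of the indicators finishes the proof.
-/

open Real Topology

lemma Gtail_antitone : Antitone Gtail := fun _ _ hst => by
  have : stdNormalCDF _ ≤ stdNormalCDF _ :=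
    measureReal_mono (μ := gaussianReal 0 1) (Set.Iic_subset_Iic.2 hst)
  unfold Gtail
  linarith

lemma two_mul_gaussianPDFReal_add_one_le_Gtail {s : ℝ} (hs : 0 ≤ s) :
    2 * gaussianPDFReal 0 1 (s + 1) ≤ Gtail s := by
  have hpdf : ∀ x ∈ Set.Ioc s (s + 1), gaussianPDFReal 0 1 (s + 1) ≤ gaussianPDFReal 0 1 x := by
    rintro x ⟨hsx, hxs⟩
    simp only [gaussianPDFReal, NNReal.coe_one, mul_one, sub_zero]
    gcongr
    nlinarith
  have hIoc : gaussianPDFReal 0 1 (s + 1) ≤ (gaussianReal 0 1).real (Set.Ioc s (s + 1)) := by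
    rw [measureReal_def, gaussianReal_apply_eq_integral 0 one_ne_zero,
      ENNReal.toReal_ofReal
        (setIntegral_nonneg measurableSet_Ioc fun x _ => gaussianPDFReal_nonneg 0 1 x)]
    simpa using setIntegral_ge_of_const_le_real measurableSet_Ioc (by simp) hpdf
      (integrable_gaussianPDFReal 0 1).integrableOn
  have htail : 1 - stdNormalCDF s = (gaussianReal 0 1).real (Set.Ioi s) := by
    rw [← Set.compl_Iic, probReal_compl_eq_one_sub measurableSet_Iic, stdNormalCDF, measureReal_def]
  have hsub := measureReal_mono (μ := gaussianReal 0 1)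
    (Set.Ioc_subset_Ioi_self : Set.Ioc s (s + 1) ⊆ Set.Ioi s)
  unfold Gtail
  linarith

lemma tendsto_measureReal_abs_ge_atTop (ν : Measure ℝ) [IsFiniteMeasure ν] :
    Tendsto (fun s => ν.real {x | s ≤ |x|}) atTop (𝓝 0) := by
  have hanti : Antitone fun s : ℝ => {x : ℝ | s ≤ |x|} := fun _ _ hst _ hx => hst.trans hx
  have hempty : (⋂ s : ℝ, {x : ℝ | s ≤ |x|}) = ∅ :=
    Set.eq_empty_of_forall_notMem fun x hx =>
      (lt_add_one |x|).not_ge (Set.mem_iInter.1 hx (|x| + 1))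
  have := tendsto_measure_iInter_atTop
    (fun s => (measurableSet_le measurable_const measurable_abs).nullMeasurableSet) hanti
    ⟨0, measure_ne_top ν _⟩
  rw [hempty, measure_empty] at this
  exact (ENNReal.tendsto_toReal ENNReal.zero_ne_top).comp this

lemma gaussianReal_abs_ge_le (μ₀ t : ℝ) (v : NNReal) :
    gaussianReal μ₀ v {x | t ≤ |x|} ≤ gaussianReal 0 v {x | t - |μ₀| ≤ |x|} := by
  rw [← zero_add μ₀, ← gaussianReal_map_add_const,
    Measure.map_apply (measurable_add_const μ₀) (measurableSet_le measurable_const measurable_abs)]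
  refine measure_mono fun x hx => ?_
  have : t ≤ |x + μ₀| := hx
  simp only [Set.mem_ofPred_eq, zero_add]
  linarith [abs_add_le x μ₀]

lemma tendsto_mul_exp_sq_atTop {γ θ : ℝ} (hθ : θ ^ 2 / 2 < γ) (a : ℝ) {c : ℝ} (hc : 0 < c) :
    Tendsto (fun u => c * exp (γ * u ^ 2 - (θ * u + a) ^ 2 / 2)) atTop atTop := by
  have hlin : Tendsto (fun u => (γ - θ ^ 2 / 2) * u - θ * a) atTop atTop :=
    tendsto_atTop_add_const_right _ _ (tendsto_id.const_mul_atTop (sub_pos.2 hθ))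
  have hquad := tendsto_atTop_add_const_right _ (-(a ^ 2 / 2)) (tendsto_id.atTop_mul_atTop₀ hlin)
  refine (tendsto_exp_atTop.comp (hquad.congr fun u => ?_)).const_mul_atTop hc
  simp only [id]
  ring

lemma eventually_mul_exp_sq_lt {γ θ : ℝ} (hθ : θ ^ 2 / 2 < γ) (a C : ℝ) {c : ℝ} (hc : 0 < c) :
    ∀ᶠ u in atTop, C * exp (-γ * u ^ 2) < c * exp (-(θ * u + a) ^ 2 / 2) := by
  filter_upwards [(tendsto_mul_exp_sq_atTop hθ a hc).eventually_gt_atTop C] with u hu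
  calc C * exp (-γ * u ^ 2) < c * exp (γ * u ^ 2 - (θ * u + a) ^ 2 / 2) * exp (-γ * u ^ 2) :=
        mul_lt_mul_of_pos_right hu (exp_pos _)
    _ = c * exp (-(θ * u + a) ^ 2 / 2) := by
        rw [mul_assoc, ← exp_add]
        ring_nf

lemma tendsto_sub_mul_sqrt_log_atTop {θ β C : ℝ} (hθ₀ : 0 ≤ θ) (hθ : θ ^ 2 / 2 < 1 - β)
    {t : ℕ → ℝ} (htG : ∀ᶠ m : ℕ in atTop, Gtail (t m) = C * (m : ℝ) ^ (β - 1)) :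
    Tendsto (fun m : ℕ => t m - θ * √(log m)) atTop atTop := by
  have hu : Tendsto (fun m : ℕ => √(log m)) atTop atTop :=
    tendsto_sqrt_atTop.comp (tendsto_log_atTop.comp tendsto_natCast_atTop_atTop)
  refine tendsto_atTop.2 fun K => ?_
  have hc : (0 : ℝ) < 2 * (√(2 * π))⁻¹ := by positivity
  filter_upwards [htG, hu.eventually (eventually_mul_exp_sq_lt hθ (max K 0 + 1) C hc),
    eventually_ge_atTop 1] with m hG hlt hm
  have hpow : (m : ℝ) ^ (β - 1) = exp (-(1 - β) * √(log m) ^ 2) := by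
    rw [sq_sqrt (log_nonneg (by exact_mod_cast hm)), rpow_def_of_pos (by positivity)]
    ring_nf
  have hlower := two_mul_gaussianPDFReal_add_one_le_Gtail
    (s := θ * √(log m) + max K 0) (by positivity)
  have hG_lt : Gtail (t m) < Gtail (θ * √(log m) + max K 0) := by
    rw [hG, hpow]
    refine hlt.trans_le (le_of_eq_of_le ?_ hlower)
    simp [gaussianPDFReal, add_assoc]
    ring
  linarith [Gtail_antitone.reflect_lt hG_lt, le_max_left K 0]

lemma measureReal_lt_average_indicator_le {Ω ι : Type*} [MeasurableSpace Ω] [Fintype ι]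
    (μ : Measure Ω) [IsFiniteMeasure μ] {A : ι → Set Ω} (hA : ∀ i, MeasurableSet (A i))
    {p : ℝ} (hp₀ : 0 ≤ p) (hp : ∀ i, μ.real (A i) ≤ p) {ε : ℝ} (hε : 0 < ε) :
    μ.real {ω | ε < (∑ i, (A i).indicator 1 ω) / (Fintype.card ι : ℝ)} ≤ p / ε := by
  set f : Ω → ℝ := fun ω => (∑ i, (A i).indicator 1 ω) / (Fintype.card ι : ℝ)
  have hint : Integrable f μ :=
    (integrable_finsetSum _ fun i _ => (integrable_const 1).indicator (hA i)).div_const _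
  have hmean : ∫ ω, f ω ∂μ ≤ p := by
    rw [integral_div, integral_finsetSum _ fun i _ => (integrable_const 1).indicator (hA i)]
    simp only [integral_indicator_one (hA _)]
    refine div_le_of_le_mul₀ (Nat.cast_nonneg _) hp₀ ?_
    calc ∑ i, μ.real (A i) ≤ ∑ _ : ι, p := Finset.sum_le_sum fun i _ => hp i
      _ = p * Fintype.card ι := by simp [mul_comm]
  have hf₀ : 0 ≤ᵐ[μ] f := ae_of_all _ fun ω =>
    div_nonneg (Finset.sum_nonneg fun i _ => Set.indicator_nonneg (fun _ _ => zero_le_one) _)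
      (Nat.cast_nonneg _)
  calc μ.real {ω | ε < f ω} ≤ μ.real {ω | ε ≤ f ω} :=
        measureReal_mono (Set.ofPred_subset_ofPred.2 fun _ h => h.le) (measure_ne_top _ _)
    _ ≤ (∫ ω, f ω ∂μ) / ε := by
        rw [le_div_iff₀ hε, mul_comm]
        exact mul_meas_ge_le_integral_of_nonneg hf₀ hint ε
    _ ≤ p / ε := by gcongr

theorem average_indicator_tendsto_zero_general
    {Ω : ℕ → Type*} [∀ m, MeasurableSpace (Ω m)]
    (μ : ∀ m, Measure (Ω m)) [∀ m, IsProbabilityMeasure (μ m)]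
    (m₁ : ℕ → ℕ)
    (θ β C : ℝ)
    (hθpos : 0 < θ) (hθ : θ < Real.sqrt (2 * (1 - β)))
    (t : ℕ → ℝ)
    (htG : ∀ m : ℕ, 3 ≤ m → Gtail (t m) = C * (m : ℝ) ^ (β - 1))
    (Z : ∀ m, Fin (m₁ m) → Ω m → ℝ)
    (hmeas : ∀ m i, Measurable (Z m i))
    (hlaw : ∀ m (i : Fin (m₁ m)), Measure.map (Z m i) (μ m)
        = gaussianReal (θ * Real.sqrt (Real.log m)) 1) :
    ∀ ε : ℝ, 0 < ε →
      Tendsto (fun m => (μ m {ω |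
          ε < (∑ i : Fin (m₁ m),
              if t m ≤ |Z m i ω| then (1:ℝ) else 0) / (m₁ m)
        }).toReal) atTop (nhds 0) := by
  intro ε hε
  have hθ₂ : θ ^ 2 / 2 < 1 - β := by
    linarith [(lt_sqrt hθpos.le).1 hθ]
  set p : ℕ → ℝ := fun m => (gaussianReal 0 1).real {x | t m - θ * √(log m) ≤ |x|}
  have hp : Tendsto p atTop (𝓝 0) :=
    (tendsto_measureReal_abs_ge_atTop _).comp
      (tendsto_sub_mul_sqrt_log_atTop hθpos.le hθ₂ (eventually_atTop.2 ⟨3, htG⟩))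
  have hZ : ∀ m i, (μ m).real (Z m i ⁻¹' {x | t m ≤ |x|}) ≤ p m := fun m i => by
    have hS : MeasurableSet {x : ℝ | t m ≤ |x|} :=
      measurableSet_le measurable_const measurable_abs
    rw [← map_measureReal_apply (hmeas m i) hS, hlaw]
    refine ENNReal.toReal_mono (measure_ne_top _ _) ?_
    simpa only [abs_of_nonneg (mul_nonneg hθpos.le (sqrt_nonneg _))] using
      gaussianReal_abs_ge_le (θ * √(log m)) (t m) 1
  have hbound : ∀ m, (μ m {ω | ε < (∑ i : Fin (m₁ m),
      if t m ≤ |Z m i ω| then (1:ℝ) else 0) / (m₁ m)}).toReal ≤ p m / ε := fun m => by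
    refine le_of_eq_of_le ?_ (measureReal_lt_average_indicator_le (μ m)
      (fun i => hmeas m i (measurableSet_le measurable_const measurable_abs))
      measureReal_nonneg (hZ m) hε)
    simp [Set.indicator_apply, measureReal_def]
  exact squeeze_zero (fun _ => ENNReal.toReal_nonneg) hbound (by simpa using hp.div_const ε)

/-- if `Z_i` are independent `N(θ√(log m), 1)` with
`0 < θ < √(2(1-β))`, and `t_m = G⁻¹(C·m^(β-1))`, then the fraction of indices with
`|Z_i| ≥ t_m` tends to `0` in probability as `m → ∞`. -/
theorem average_indicator_tendsto_zero
    {Ω : ℕ → Type*} [∀ m, MeasurableSpace (Ω m)]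
    (μ : ∀ m, Measure (Ω m)) [∀ m, IsProbabilityMeasure (μ m)]
    (m₁ : ℕ → ℕ) (hm₁ : ∀ m, 1 ≤ m₁ m)
    (θ β C : ℝ) (hβ : β ∈ Set.Ioo (0 : ℝ) 1) (hC : 0 < C)
    (hθpos : 0 < θ) (hθ : θ < Real.sqrt (2 * (1 - β)))
    (t : ℕ → ℝ) (ht0 : ∀ m, 0 ≤ t m)
    (htG : ∀ m : ℕ, 3 ≤ m → Gtail (t m) = C * (m : ℝ) ^ (β - 1))
    (Z : ∀ m, Fin (m₁ m) → Ω m → ℝ)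
    (hmeas : ∀ m i, Measurable (Z m i))
    (hindep : ∀ m, iIndepFun (Z m) (μ m))
    (hlaw : ∀ m (i : Fin (m₁ m)), Measure.map (Z m i) (μ m)
        = gaussianReal (θ * Real.sqrt (Real.log m)) 1) :
    ∀ ε : ℝ, 0 < ε →
      Tendsto (fun m => (μ m {ω |
          ε < (∑ i : Fin (m₁ m),
              if t m ≤ |Z m i ω| then (1:ℝ) else 0) / (m₁ m)
        }).toReal) atTop (nhds 0) :=
  average_indicator_tendsto_zero_general μ m₁ θ β C hθpos hθ t htG Z hmeas hlaw
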